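/- arXiv:2001.01154 — 2 statements merged into one kernel-verified Lean document; each statement's English description precedes it below -/
import Mathlib

section
/- Asymptotic angle bound for shortest paths to a compact set, lower curvature bound (Lemma 4.3, curvature ≥ 0 case). Let X be a proper metric space in which every pair of points is joined by a unit-speed shortest path and in which every point has a neighborhood that is a region of curvature ≥ 0. Let K ⊆ X be compact and nonempty, let γ : [0,T] → X be a unit-speed geodesic with γ(0) ∉ K, and write ℓ(t) := Metric.infDist (γ(t)) K. Let tₙ ∈ (0,T] with tₙ → 0, and for each n let σₙ : [0,1] → X be a constant-speed shortest path from γ(tₙ) to K, meaning dist(σₙ(u), σₙ(v)) = ℓ(tₙ)·|u − v| for all u, v ∈ [0,1], σₙ(0) = γ(tₙ), and σₙ(1) ∈ K; similarly let σ₀ : [0,1] → X be a constant-speed shortest path from γ(0) to K with speed ℓ(0). Suppose σₙ → σ₀ uniformly on [0,1]. Let σ̂₀ : [0, ℓ(0)] → X, σ̂₀(r) = σ₀(r/ℓ(0)), be the unit-speed reparameterization of σ₀. Then there exists s' > 0 such that for every s ∈ (0, s'], limsup_{n→∞} ∠⁰_{γ(tₙ)}(γ(0), σₙ(s/ℓ(tₙ)))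 ≤ π − ∠⁺(γ, σ̂₀) (the comparison angles being defined for all sufficiently large n, since ℓ(tₙ) → ℓ(0) > 0). -/
open Filter Topology Metric Set

/-!
Fix a region `U` of curvature `≥ 0` around `γ 0`. In a geodesic triangle in `U`, the distance
from a vertex to a point of the opposite side is at least the corresponding distance in the
comparison triangle; by Stewart's theorem this is a linear inequality between squared distances.
It gives two facts at the vertex `γ tₙ`, for `n` large: the comparison angle between `γ 0` and
the point of `σₙ` at distance `r` can only grow as `r` decreases from `s` to `u`; and the
comparison angles between that point and `γ 0`, resp. `γ (tₙ + t)`, sum to at most `π`. As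
`n → ∞` the latter angle tends to the comparison angle at `γ 0` between `γ t` and the point of
`σ₀` at distance `u`, whose limsup as `t, u → 0⁺` is the upper angle.
-/

noncomputable section

/-- `γ` is a unit-speed geodesic (shortest path) on the interval `[0, T]`:
the distance between any two of its points equals the parameter difference. -/
def IsUnitSpeedGeodesicOn {X : Type*} [MetricSpace X] (γ : ℝ → X) (T : ℝ) : Prop :=
  ∀ t ∈ Set.Icc (0:ℝ) T, ∀ t' ∈ Set.Icc (0:ℝ) T, dist (γ t) (γ t') = |t - t'|

/-- The Euclidean comparison angle `∠⁰_p(x, y)` at the vertex `p`. -/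
def compAngle {X : Type*} [MetricSpace X] (p x y : X) : ℝ :=
  Real.arccos ((dist p x ^ 2 + dist p y ^ 2 - dist x y ^ 2) /
    (2 * dist p x * dist p y))

/-- The upper angle `∠⁺(γ, η)` between two geodesics with `γ 0 = η 0`:
the limsup of comparison angles `∠⁰_{γ 0}(γ t, η s)` as `(t, s) → (0⁺, 0⁺)`. -/
def upperAngle {X : Type*} [MetricSpace X] (γ η : ℝ → X) : ℝ :=
  Filter.limsup (fun ts : ℝ × ℝ => compAngle (γ 0) (γ ts.1) (η ts.2))
    ((𝓝[>] (0:ℝ)) ×ˢ (𝓝[>] (0:ℝ)))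

/-- The lower angle `∠⁻(γ, η)`: liminf of comparison angles. -/
def lowerAngle {X : Type*} [MetricSpace X] (γ η : ℝ → X) : ℝ :=
  Filter.liminf (fun ts : ℝ × ℝ => compAngle (γ 0) (γ ts.1) (η ts.2))
    ((𝓝[>] (0:ℝ)) ×ˢ (𝓝[>] (0:ℝ)))

/-- `U` is a region of curvature bounded by `0` in the comparison sense, where
`rel` is `≤` (curvature `≤ 0`) or `≥` (curvature `≥ 0`): any two points of `U`
are joined by a unit-speed shortest path with image in `U`, and for every
geodesic triangle contained in `U` and every Euclidean comparison triangle,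
distances between pairs of points on the sides are related by `rel` to the
distances between the corresponding comparison points. -/
def IsCurvRegion {X : Type*} [MetricSpace X] (rel : ℝ → ℝ → Prop) (U : Set X) : Prop :=
  (∀ x ∈ U, ∀ y ∈ U, ∃ γ : ℝ → X, IsUnitSpeedGeodesicOn γ (dist x y) ∧
    γ 0 = x ∧ γ (dist x y) = y ∧ ∀ t ∈ Set.Icc (0:ℝ) (dist x y), γ t ∈ U) ∧
  (∀ x ∈ U, ∀ y ∈ U, ∀ z ∈ U, ∀ p : Fin 3 → ℝ → X,
    (∀ i, IsUnitSpeedGeodesicOn (p i) (![dist x y, dist x z, dist y z] i) ∧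
      p i 0 = (![(x, y), (x, z), (y, z)] i).1 ∧
      p i (![dist x y, dist x z, dist y z] i) = (![(x, y), (x, z), (y, z)] i).2 ∧
      ∀ t ∈ Set.Icc (0:ℝ) (![dist x y, dist x z, dist y z] i), p i t ∈ U) →
    ∀ xb yb zb : EuclideanSpace ℝ (Fin 2),
      dist xb yb = dist x y → dist xb zb = dist x z → dist yb zb = dist y z →
      ∀ i j : Fin 3, ∀ a b : ℝ,
        a ∈ Set.Icc (0:ℝ) (![dist x y, dist x z, dist y z] i) →
        b ∈ Set.Icc (0:ℝ) (![dist x y, dist x z, dist y z] j) →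
        rel (dist (p i a) (p j b))
          (dist
            (![fun c : ℝ => AffineMap.lineMap xb yb (c / dist x y),
               fun c : ℝ => AffineMap.lineMap xb zb (c / dist x z),
               fun c : ℝ => AffineMap.lineMap yb zb (c / dist y z)] i a)
            (![fun c : ℝ => AffineMap.lineMap xb yb (c / dist x y),
               fun c : ℝ => AffineMap.lineMap xb zb (c / dist x z),
               fun c : ℝ => AffineMap.lineMap yb zb (c / dist y z)] j b)))

/-- A region of curvature `≤ 0`. -/
def IsCurvLeRegion {X : Type*} [MetricSpace X] (U : Set X) : Prop :=
  IsCurvRegion (· ≤ ·) U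

/-- A region of curvature `≥ 0`. -/
def IsCurvGeRegion {X : Type*} [MetricSpace X] (U : Set X) : Prop :=
  IsCurvRegion (· ≥ ·) U

end

theorem arccos_add_arccos_le_pi {x y : ℝ} (h : 0 ≤ x + y) :
    Real.arccos x + Real.arccos y ≤ Real.pi := by
  have := Real.arccos_le_arccos (show -y ≤ x by linarith)
  rw [Real.arccos_neg] at this
  linarith

theorem dist_lineMap_sq {E : Type*} [NormedAddCommGroup E] [InnerProductSpace ℝ E]
    (x y z : E) (c : ℝ) :
    dist (AffineMap.lineMap x y c) z ^ 2 =
      (1 - c) * dist x z ^ 2 + c * dist y z ^ 2 - c * (1 - c) * dist x y ^ 2 := by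
  have hxy : x - y = (x - z) - (y - z) := by abel
  have hl : AffineMap.lineMap x y c - z = (1 - c) • (x - z) + c • (y - z) := by
    rw [AffineMap.lineMap_apply_module]; module
  simp only [dist_eq_norm, hl, hxy, norm_add_sq_real, norm_sub_sq_real, inner_smul_left,
    inner_smul_right, norm_smul, mul_pow, Real.norm_eq_abs, sq_abs, RCLike.conj_to_real]
  ring

theorem EuclideanSpace.dist_toLp_fin_two (a b c d : ℝ) :
    dist !₂[a, b] !₂[c, d] = √((a - c) ^ 2 + (b - d) ^ 2) := by
  simp [EuclideanSpace.dist_eq, Fin.sum_univ_two, Real.dist_eq, sq_abs]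

theorem exists_euclidean_triangle {a b c : ℝ} (ha : a ≤ b + c) (hb : b ≤ a + c)
    (hc : c ≤ a + b) :
    ∃ xb yb zb : EuclideanSpace ℝ (Fin 2), dist xb yb = a ∧ dist xb zb = b ∧ dist yb zb = c := by
  -- `p` is the abscissa of the third vertex, from the law of cosines.
  set p := (a ^ 2 + b ^ 2 - c ^ 2) / (2 * a)
  have hp : 2 * a * p = a ^ 2 + b ^ 2 - c ^ 2 := by
    rcases eq_or_ne a 0 with rfl | h0
    · nlinarith
    · exact mul_div_cancel₀ _ (mul_ne_zero two_ne_zero h0)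
  have hpb : p ^ 2 ≤ b ^ 2 := by
    rw [div_pow]
    refine div_le_of_le_mul₀ (by positivity) (by positivity) ?_
    nlinarith [mul_nonneg (mul_nonneg (sub_nonneg.2 hc) (sub_nonneg.2 ha)) (sub_nonneg.2 hb)]
  have hq := Real.sq_sqrt (sub_nonneg.2 hpb)
  refine ⟨!₂[0, 0], !₂[a, 0], !₂[p, √(b ^ 2 - p ^ 2)], ?_, ?_, ?_⟩ <;>
    rw [EuclideanSpace.dist_toLp_fin_two, Real.sqrt_eq_iff_eq_sq (by positivity) (by linarith)] <;>
    nlinarith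

theorem exists_comparison_triangle {X : Type*} [MetricSpace X] (x y z : X) :
    ∃ xb yb zb : EuclideanSpace ℝ (Fin 2),
      dist xb yb = dist x y ∧ dist xb zb = dist x z ∧ dist yb zb = dist y z :=
  exists_euclidean_triangle (by simpa [dist_comm y z] using dist_triangle x z y)
    (dist_triangle x y z) (dist_triangle_left y z x)

section

variable {X : Type*} [MetricSpace X]

theorem lipschitzOnWith_of_dist_eq_mul_abs {f : ℝ → X} {S : Set ℝ} {L : ℝ}
    (h : ∀ u ∈ S, ∀ v ∈ S, dist (f u) (f v) = L * |u - v|) :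
    LipschitzOnWith L.toNNReal f S :=
  LipschitzOnWith.of_dist_le_mul fun u hu v hv => by
    rw [h u hu v hv, Real.dist_eq]
    exact mul_le_mul_of_nonneg_right (Real.le_coe_toNNReal L) (abs_nonneg _)

theorem IsUnitSpeedGeodesicOn.mono {γ : ℝ → X} {T T' : ℝ} (hγ : IsUnitSpeedGeodesicOn γ T)
    (hT : T' ≤ T) : IsUnitSpeedGeodesicOn γ T' :=
  fun t ht t' ht' => hγ t ⟨ht.1, ht.2.trans hT⟩ t' ⟨ht'.1, ht'.2.trans hT⟩

theorem IsUnitSpeedGeodesicOn.dist_zero {γ : ℝ → X} {T t : ℝ} (hγ : IsUnitSpeedGeodesicOn γ T)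
    (ht : t ∈ Icc 0 T) : dist (γ t) (γ 0) = t := by
  rw [hγ t ht 0 ⟨le_rfl, ht.1.trans ht.2⟩, sub_zero, abs_of_nonneg ht.1]

theorem IsUnitSpeedGeodesicOn.continuousOn {γ : ℝ → X} {T : ℝ}
    (hγ : IsUnitSpeedGeodesicOn γ T) : ContinuousOn γ (Icc 0 T) :=
  (lipschitzOnWith_of_dist_eq_mul_abs (L := 1) fun t ht t' ht' => by
    rw [one_mul, hγ t ht t' ht']).continuousOn

theorem isUnitSpeedGeodesicOn_comp_div {σ : ℝ → X} {L : ℝ} (hL : 0 < L)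
    (hσ : ∀ u ∈ Icc (0 : ℝ) 1, ∀ v ∈ Icc (0 : ℝ) 1, dist (σ u) (σ v) = L * |u - v|) :
    IsUnitSpeedGeodesicOn (fun r => σ (r / L)) L := by
  have hmem : ∀ r ∈ Icc 0 L, r / L ∈ Icc (0 : ℝ) 1 := fun r hr =>
    ⟨div_nonneg hr.1 hL.le, div_le_one_of_le₀ hr.2 hL.le⟩
  intro r hr r' hr'
  rw [hσ _ (hmem r hr) _ (hmem r' hr'), ← sub_div, abs_div, abs_of_pos hL,
    mul_div_cancel₀ _ hL.ne']

theorem IsUnitSpeedGeodesicOn.tendsto_comp {ι : Type*} {γ : ℝ → X} {T s : ℝ}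
    {l : Filter ι} {f : ι → ℝ} (hγ : IsUnitSpeedGeodesicOn γ T) (hs : s ∈ Icc 0 T)
    (hf : Tendsto f l (𝓝 s)) (hfT : ∀ᶠ i in l, f i ∈ Icc 0 T) :
    Tendsto (fun i => γ (f i)) l (𝓝 (γ s)) :=
  (hγ.continuousOn s hs).tendsto.comp (tendsto_nhdsWithin_iff.2 ⟨hf, hfT⟩)

theorem TendstoUniformlyOn.tendsto_apply_div {ι : Type*} {l : Filter ι}
    {F : ι → ℝ → X} {f : ℝ → X} {L : ι → ℝ} {L₀ u : ℝ}
    (hF : TendstoUniformlyOn F f l (Icc 0 1)) (hf : ContinuousOn f (Icc 0 1))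
    (hL : Tendsto L l (𝓝 L₀)) (hu : 0 ≤ u) (huL : u < L₀) :
    Tendsto (fun i => F i (u / L i)) l (𝓝 (f (u / L₀))) :=
  hF.tendsto_comp
    (hf _ ⟨div_nonneg hu (hu.trans huL.le), div_le_one_of_le₀ huL.le (hu.trans huL.le)⟩) <|
    tendsto_nhdsWithin_iff.2 ⟨tendsto_const_nhds.div hL (hu.trans_lt huL).ne',
      (hL.eventually_const_lt huL).mono fun _ hi =>
        ⟨div_nonneg hu (hu.trans hi.le), div_le_one_of_le₀ hi.le (hu.trans hi.le)⟩⟩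

theorem Filter.Tendsto.compAngle {ι : Type*} {l : Filter ι}
    {p x y : ι → X} {p₀ x₀ y₀ : X} (hp : Tendsto p l (𝓝 p₀)) (hx : Tendsto x l (𝓝 x₀))
    (hy : Tendsto y l (𝓝 y₀)) (hpx : p₀ ≠ x₀) (hpy : p₀ ≠ y₀) :
    Tendsto (fun i => compAngle (p i) (x i) (y i)) l (𝓝 (compAngle p₀ x₀ y₀)) := by
  have hd : 2 * dist p₀ x₀ * dist p₀ y₀ ≠ 0 := by
    have := dist_pos.2 hpx
    have := dist_pos.2 hpy
    positivity
  exact (Real.continuous_arccos.tendsto _).comp <|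
    ((((hp.dist hx).pow 2).add ((hp.dist hy).pow 2)).sub ((hx.dist hy).pow 2)).div
      ((tendsto_const_nhds.mul (hp.dist hx)).mul (hp.dist hy)) hd

theorem upperAngle_le_of_eventually_le {γ η : ℝ → X} {c : ℝ}
    (h : ∀ᶠ ts : ℝ × ℝ in 𝓝[>] 0 ×ˢ 𝓝[>] 0, compAngle (γ 0) (γ ts.1) (η ts.2) ≤ c) :
    upperAngle γ η ≤ c :=
  limsup_le_of_le (isCoboundedUnder_le_of_le _ fun _ => Real.arccos_nonneg _) h

end

namespace IsCurvGeRegion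

variable {X : Type*} [MetricSpace X] {U : Set X}

theorem dist_lineMap_le (hU : IsCurvGeRegion U) {c : ℝ → X} {d a : ℝ} {z : X}
    (hc : IsUnitSpeedGeodesicOn c d) (hcU : ∀ r ∈ Icc 0 d, c r ∈ U) (hz : z ∈ U)
    (ha : a ∈ Icc 0 d) {xb yb zb : EuclideanSpace ℝ (Fin 2)}
    (hxy : dist xb yb = dist (c 0) (c d)) (hxz : dist xb zb = dist (c 0) z)
    (hyz : dist yb zb = dist (c d) z) :
    dist (AffineMap.lineMap xb yb (a / d)) zb ≤ dist (c a) z := by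
  obtain ⟨hgeo, hcomp⟩ := hU
  set x := c 0
  set y := c d
  have hd0 : 0 ≤ d := ha.1.trans ha.2
  have hdxy : dist x y = d := by rw [dist_comm, hc.dist_zero ⟨hd0, le_rfl⟩]
  have hx : x ∈ U := hcU 0 ⟨le_rfl, hd0⟩
  have hy : y ∈ U := hcU d ⟨hd0, le_rfl⟩
  obtain ⟨g₁, hg₁, hg₁0, hg₁1, hg₁U⟩ := hgeo x hx z hz
  obtain ⟨g₂, hg₂, hg₂0, hg₂1, hg₂U⟩ := hgeo y hy z hz
  have hsides : ∀ i,
      IsUnitSpeedGeodesicOn (![c, g₁, g₂] i) (![dist x y, dist x z, dist y z] i) ∧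
      ![c, g₁, g₂] i 0 = (![(x, y), (x, z), (y, z)] i).1 ∧
      ![c, g₁, g₂] i (![dist x y, dist x z, dist y z] i) = (![(x, y), (x, z), (y, z)] i).2 ∧
      ∀ t ∈ Icc (0 : ℝ) (![dist x y, dist x z, dist y z] i), ![c, g₁, g₂] i t ∈ U := by
    intro i
    fin_cases i
    · exact ⟨hdxy ▸ hc, rfl, by simp [hdxy, y], hdxy ▸ hcU⟩
    · exact ⟨hg₁, hg₁0, hg₁1, hg₁U⟩
    · exact ⟨hg₂, hg₂0, hg₂1, hg₂U⟩
  have hle := hcomp x hx y hy z hz _ hsides xb yb zb hxy hxz hyz 0 1 a (dist x z)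
    (by simpa [hdxy] using ha) ⟨dist_nonneg, le_rfl⟩
  have hzb : AffineMap.lineMap xb zb (dist x z / dist x z) = zb := by
    rcases eq_or_ne (dist x z) 0 with h | h
    · rw [← hxz, dist_eq_zero] at h
      rw [h, AffineMap.lineMap_same_apply]
    · rw [div_self h, AffineMap.lineMap_apply_one]
  simpa only [Matrix.cons_val_zero, Matrix.cons_val_one, hg₁1, hzb, hdxy] using hle

/-- Stewart's theorem in the comparison triangle turns `dist_lineMap_le` into this inequality. -/
theorem stewart_le (hU : IsCurvGeRegion U) {c : ℝ → X} {d a : ℝ} {z : X}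
    (hc : IsUnitSpeedGeodesicOn c d) (hcU : ∀ r ∈ Icc 0 d, c r ∈ U) (hz : z ∈ U)
    (ha : a ∈ Icc 0 d) :
    (d - a) * dist (c 0) z ^ 2 + a * dist (c d) z ^ 2 - a * (d - a) * d ≤
      d * dist (c a) z ^ 2 := by
  have hd0 : 0 ≤ d := ha.1.trans ha.2
  have hdxy : dist (c 0) (c d) = d := by rw [dist_comm, hc.dist_zero ⟨hd0, le_rfl⟩]
  obtain ⟨xb, yb, zb, hxy, hxz, hyz⟩ := exists_comparison_triangle (c 0) (c d) z
  have hsq := pow_le_pow_left₀ dist_nonneg (hU.dist_lineMap_le hc hcU hz ha hxy hxz hyz) 2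
  rw [dist_lineMap_sq, hxy, hxz, hyz, hdxy] at hsq
  rcases hd0.eq_or_lt with rfl | hd
  · obtain rfl : a = 0 := le_antisymm ha.2 ha.1
    simp
  · calc (d - a) * dist (c 0) z ^ 2 + a * dist (c d) z ^ 2 - a * (d - a) * d
        = d * ((1 - a / d) * dist (c 0) z ^ 2 + a / d * dist (c d) z ^ 2 -
            a / d * (1 - a / d) * d ^ 2) := by field_simp
      _ ≤ d * dist (c a) z ^ 2 := mul_le_mul_of_nonneg_left hsq hd.le

theorem compAngle_le_compAngle (hU : IsCurvGeRegion U) {c : ℝ → X} {s u : ℝ} {x : X}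
    (hc : IsUnitSpeedGeodesicOn c s) (hcU : ∀ r ∈ Icc 0 s, c r ∈ U) (hx : x ∈ U)
    (hcx : c 0 ≠ x) (hu : 0 < u) (hus : u ≤ s) :
    compAngle (c 0) x (c s) ≤ compAngle (c 0) x (c u) := by
  have hst := hU.stewart_le hc hcU hx ⟨hu.le, hus⟩
  have hs0 : 0 < s := hu.trans_le hus
  have hA := dist_pos.2 hcx
  have hs : dist (c 0) (c s) = s := by rw [dist_comm, hc.dist_zero ⟨hu.le.trans hus, le_rfl⟩]
  have hu' : dist (c 0) (c u) = u := by rw [dist_comm, hc.dist_zero ⟨hu.le, hus⟩]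
  unfold compAngle
  rw [hs, hu', dist_comm x, dist_comm x]
  refine Real.arccos_le_arccos ((div_le_div_iff₀ (by positivity) (by positivity)).2 ?_)
  nlinarith

theorem compAngle_add_compAngle_le_pi (hU : IsCurvGeRegion U) {c : ℝ → X} {L a : ℝ} {z : X}
    (hc : IsUnitSpeedGeodesicOn c L) (hcU : ∀ r ∈ Icc 0 L, c r ∈ U) (hz : z ∈ U)
    (ha : 0 < a) (haL : a < L) (hcz : c a ≠ z) :
    compAngle (c a) (c 0) z + compAngle (c a) (c L) z ≤ Real.pi := by
  have hst := hU.stewart_le hc hcU hz ⟨ha.le, haL.le⟩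
  have hD := dist_pos.2 hcz
  have h0 : dist (c a) (c 0) = a := hc.dist_zero ⟨ha.le, haL.le⟩
  have hL : dist (c a) (c L) = L - a := by
    rw [hc a ⟨ha.le, haL.le⟩ L ⟨ha.le.trans haL.le, le_rfl⟩, abs_sub_comm,
      abs_of_pos (sub_pos.2 haL)]
  have hLa : 0 < L - a := sub_pos.2 haL
  unfold compAngle
  rw [h0, hL]
  refine arccos_add_arccos_le_pi ?_
  rw [div_add_div _ _ (by positivity) (by positivity)]
  refine div_nonneg ?_ (by positivity)
  nlinarith [mul_le_mul_of_nonneg_left hst (by positivity : (0 : ℝ) ≤ 2 * dist (c a) z)]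

theorem compAngle_le_pi_sub_compAngle (hU : IsCurvGeRegion U) {γ c : ℝ → X} {ε T s t₀ t u : ℝ}
    (hball : ball (γ 0) ε ⊆ U) (hγ : IsUnitSpeedGeodesicOn γ T)
    (hc : IsUnitSpeedGeodesicOn c s) (hc0 : c 0 = γ t₀) (ht₀ : 0 < t₀) (ht : 0 < t)
    (hu : 0 < u) (hus : u ≤ s) (hT : t₀ + t ≤ T) (htε : t₀ + t < ε) (hsε : t₀ + s < ε) :
    compAngle (γ t₀) (γ 0) (c s) ≤ Real.pi - compAngle (γ t₀) (γ (t₀ + t)) (c u) := by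
  have hγ' := hγ.mono hT
  have hγU : ∀ r ∈ Icc 0 (t₀ + t), γ r ∈ U := fun r hr =>
    hball (by rw [mem_ball, hγ'.dist_zero hr]; linarith [hr.2])
  have hcU : ∀ r ∈ Icc 0 s, c r ∈ U := fun r hr => hball <| by
    rw [mem_ball]
    calc dist (c r) (γ 0) ≤ dist (c r) (c 0) + dist (γ t₀) (γ 0) :=
          hc0 ▸ dist_triangle _ _ _
      _ = r + t₀ := by rw [hc.dist_zero hr, hγ'.dist_zero ⟨ht₀.le, by linarith⟩]
      _ < ε := by linarith [hr.2]
  have hγc : γ t₀ ≠ c u := by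
    rw [← hc0, ← dist_pos, dist_comm, hc.dist_zero ⟨hu.le, hus⟩]
    exact hu
  have hmono := hU.compAngle_le_compAngle hc hcU (hγU 0 ⟨le_rfl, by linarith⟩)
    (by rw [hc0, ← dist_pos, hγ'.dist_zero ⟨ht₀.le, by linarith⟩]; exact ht₀) hu hus
  rw [hc0] at hmono
  have hadj := hU.compAngle_add_compAngle_le_pi hγ' hγU (hcU u ⟨hu.le, hus⟩) ht₀
    (by linarith) hγc
  linarith

theorem limsup_compAngle_le (hU : IsCurvGeRegion U) {γ : ℝ → X} {ε T : ℝ} (hball : ball (γ 0) ε ⊆ U)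
    (hγ : IsUnitSpeedGeodesicOn γ T) {tn : ℕ → ℝ} (htn : ∀ n, 0 < tn n)
    (htn0 : Tendsto tn atTop (𝓝 0)) {σn : ℕ → ℝ → X} {L : ℕ → ℝ}
    (hσn : ∀ n, ∀ u ∈ Icc (0 : ℝ) 1, ∀ v ∈ Icc (0 : ℝ) 1, dist (σn n u) (σn n v) = L n * |u - v|)
    (hσn0 : ∀ n, σn n 0 = γ (tn n)) {σ₀ : ℝ → X} {l₀ : ℝ} (hL : Tendsto L atTop (𝓝 l₀))
    (hσ₀ : ∀ u ∈ Icc (0 : ℝ) 1, ∀ v ∈ Icc (0 : ℝ) 1, dist (σ₀ u) (σ₀ v) = l₀ * |u - v|)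
    (hσ₀0 : σ₀ 0 = γ 0) (hconv : TendstoUniformlyOn σn σ₀ atTop (Icc 0 1)) {s t u : ℝ}
    (ht : 0 < t) (htε : t < ε) (htT : t < T) (hu : 0 < u) (hus : u ≤ s) (hsε : s < ε)
    (hsl₀ : s < l₀) :
    limsup (fun n => compAngle (γ (tn n)) (γ 0) (σn n (s / L n))) atTop ≤
      Real.pi - compAngle (γ 0) (γ t) (σ₀ (u / l₀)) := by
  have hl₀ : 0 < l₀ := by linarith
  have hnear : ∀ᶠ n in atTop, tn n + t < min ε T ∧ tn n + s < ε ∧ s < L n :=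
    ((htn0.add_const t).eventually_lt_const (by simpa using lt_min htε htT)).and <|
      ((htn0.add_const s).eventually_lt_const (by simpa using hsε)).and
        (hL.eventually_const_lt hsl₀)
  have hangle : ∀ᶠ n in atTop, compAngle (γ (tn n)) (γ 0) (σn n (s / L n)) ≤
      Real.pi - compAngle (γ (tn n)) (γ (tn n + t)) (σn n (u / L n)) := by
    filter_upwards [hnear] with n ⟨hnt, hns, hsL⟩
    obtain ⟨hntε, hntT⟩ := lt_min_iff.1 hnt
    exact hU.compAngle_le_pi_sub_compAngle (c := fun r => σn n (r / L n)) hball hγ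
      ((isUnitSpeedGeodesicOn_comp_div (by linarith) (hσn n)).mono hsL.le)
      (by simp [hσn0 n]) (htn n) ht hu hus hntT.le hntε hns
  have hγtn : Tendsto (fun n => γ (tn n)) atTop (𝓝 (γ 0)) :=
    hγ.tendsto_comp ⟨le_rfl, by linarith⟩ htn0 <|
      hnear.mono fun n hn => ⟨(htn n).le, by linarith [lt_min_iff.1 hn.1]⟩
  have hγt : Tendsto (fun n => γ (tn n + t)) atTop (𝓝 (γ t)) :=
    hγ.tendsto_comp ⟨ht.le, htT.le⟩ (by simpa using htn0.add_const t) <|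
      hnear.mono fun n hn => ⟨by linarith [htn n], by linarith [lt_min_iff.1 hn.1]⟩
  have hσu := hconv.tendsto_apply_div (lipschitzOnWith_of_dist_eq_mul_abs hσ₀).continuousOn hL
    hu.le (by linarith)
  have hγ0t : γ 0 ≠ γ t := by
    rw [← dist_pos, dist_comm, hγ.dist_zero ⟨ht.le, htT.le⟩]
    exact ht
  have hγ0σ : γ 0 ≠ σ₀ (u / l₀) := by
    have hdist := (isUnitSpeedGeodesicOn_comp_div hl₀ hσ₀).dist_zero ⟨hu.le, by linarith⟩
    rw [zero_div, hσ₀0] at hdist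
    rw [← dist_pos, dist_comm, hdist]
    exact hu
  have hlim := (tendsto_const_nhds (x := Real.pi)).sub (hγtn.compAngle hγt hσu hγ0t hγ0σ)
  exact (limsup_le_limsup hangle (isCoboundedUnder_le_of_le atTop fun n => Real.arccos_nonneg _)
    hlim.isBoundedUnder_le).trans_eq hlim.limsup_eq

end IsCurvGeRegion

theorem asymptotic_angle_bound_of_curvGe_general {X : Type*} [MetricSpace X]
    (hcurv : ∀ p : X, ∃ U ∈ 𝓝 p, IsCurvGeRegion U)
    {K : Set X} (hK : IsCompact K) (hKne : K.Nonempty)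
    {T : ℝ} (hT : 0 < T)
    (γ : ℝ → X) (hγ : IsUnitSpeedGeodesicOn γ T) (hγ0 : γ 0 ∉ K)
    (tn : ℕ → ℝ) (htn : ∀ n, tn n ∈ Set.Ioc (0:ℝ) T)
    (htn0 : Filter.Tendsto tn atTop (𝓝 0))
    (σn : ℕ → ℝ → X)
    (hσn : ∀ n, (∀ u ∈ Set.Icc (0:ℝ) 1, ∀ v ∈ Set.Icc (0:ℝ) 1,
        dist (σn n u) (σn n v) = Metric.infDist (γ (tn n)) K * |u - v|) ∧
      σn n 0 = γ (tn n) ∧ σn n 1 ∈ K)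
    (σ0 : ℝ → X)
    (hσ0 : (∀ u ∈ Set.Icc (0:ℝ) 1, ∀ v ∈ Set.Icc (0:ℝ) 1,
        dist (σ0 u) (σ0 v) = Metric.infDist (γ 0) K * |u - v|) ∧
      σ0 0 = γ 0 ∧ σ0 1 ∈ K)
    (hconv : TendstoUniformlyOn (fun n u => σn n u) σ0 atTop (Set.Icc 0 1)) :
    ∃ s' > (0:ℝ), ∀ s ∈ Set.Ioc (0:ℝ) s',
      Filter.limsup (fun n => compAngle (γ (tn n)) (γ 0)
          (σn n (s / Metric.infDist (γ (tn n)) K))) atTop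
        ≤ Real.pi - upperAngle γ (fun r => σ0 (r / Metric.infDist (γ 0) K)) := by
  obtain ⟨U, hU, hUcurv⟩ := hcurv (γ 0)
  obtain ⟨ε, hε, hball⟩ := Metric.mem_nhds_iff.mp hU
  have hl₀ : 0 < infDist (γ 0) K := (hK.isClosed.notMem_iff_infDist_pos hKne).mp hγ0
  have hγtn : Tendsto (fun n => γ (tn n)) atTop (𝓝 (γ 0)) :=
    hγ.tendsto_comp ⟨le_rfl, hT.le⟩ htn0 (.of_forall fun n => Ioc_subset_Icc_self (htn n))
  have hL := ((continuous_infDist_pt K).tendsto _).comp hγtn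
  refine ⟨min (ε / 2) (infDist (γ 0) K / 2), by positivity, fun s hs =>
    le_sub_comm.1 (upperAngle_le_of_eventually_le ?_)⟩
  obtain ⟨hsε, hsl₀⟩ := le_min_iff.1 hs.2
  filter_upwards [prod_mem_prod (Ioo_mem_nhdsGT (lt_min hε hT)) (Ioc_mem_nhdsGT hs.1)]
    with ⟨t, u⟩ ⟨⟨ht, htεT⟩, hu, hus⟩
  exact le_sub_comm.1 <| hUcurv.limsup_compAngle_le hball hγ (fun n => (htn n).1) htn0
    (fun n => (hσn n).1) (fun n => (hσn n).2.1) hL hσ0.1 hσ0.2.1 hconv ht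
    (lt_min_iff.1 htεT).1 (lt_min_iff.1 htεT).2 hu hus (by linarith) (by linarith)

/-- Lemma 4.3, curvature `≥ 0` case: asymptotic angle bound for shortest
paths to a compact set. -/
theorem asymptotic_angle_bound_of_curvGe {X : Type*} [MetricSpace X]
    [ProperSpace X]
    (hgeo : ∀ x y : X, ∃ γ : ℝ → X, IsUnitSpeedGeodesicOn γ (dist x y) ∧
      γ 0 = x ∧ γ (dist x y) = y)
    (hcurv : ∀ p : X, ∃ U ∈ 𝓝 p, IsCurvGeRegion U)
    {K : Set X} (hK : IsCompact K) (hKne : K.Nonempty)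
    {T : ℝ} (hT : 0 < T)
    (γ : ℝ → X) (hγ : IsUnitSpeedGeodesicOn γ T) (hγ0 : γ 0 ∉ K)
    (tn : ℕ → ℝ) (htn : ∀ n, tn n ∈ Set.Ioc (0:ℝ) T)
    (htn0 : Filter.Tendsto tn atTop (𝓝 0))
    (σn : ℕ → ℝ → X)
    (hσn : ∀ n, (∀ u ∈ Set.Icc (0:ℝ) 1, ∀ v ∈ Set.Icc (0:ℝ) 1,
        dist (σn n u) (σn n v) = Metric.infDist (γ (tn n)) K * |u - v|) ∧
      σn n 0 = γ (tn n) ∧ σn n 1 ∈ K)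
    (σ0 : ℝ → X)
    (hσ0 : (∀ u ∈ Set.Icc (0:ℝ) 1, ∀ v ∈ Set.Icc (0:ℝ) 1,
        dist (σ0 u) (σ0 v) = Metric.infDist (γ 0) K * |u - v|) ∧
      σ0 0 = γ 0 ∧ σ0 1 ∈ K)
    (hconv : TendstoUniformlyOn (fun n u => σn n u) σ0 atTop (Set.Icc 0 1)) :
    ∃ s' > (0:ℝ), ∀ s ∈ Set.Ioc (0:ℝ) s',
      Filter.limsup (fun n => compAngle (γ (tn n)) (γ 0)
          (σn n (s / Metric.infDist (γ (tn n)) K))) atTop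
        ≤ Real.pi - upperAngle γ (fun r => σ0 (r / Metric.infDist (γ 0) K)) :=
  asymptotic_angle_bound_of_curvGe_general hcurv hK hKne hT γ hγ hγ0 tn htn htn0 σn hσn σ0 hσ0 hconv
end

section
/- Two-variable monotone convergence (Appendix Lemma B.1). Let f : ℝ → ℝ → ℝ and a ∈ ℝ. Suppose that for every r ∈ ℝ the functions x ↦ f x r and x ↦ f r x are monotone nondecreasing, and suppose that f is bounded below on (a, a+ε) × (a, a+ε) for some ε > 0. Then the right-sided limit superior and limit inferior of f at (a, a) coincide; that is, the limsup and liminf of (x, y) ↦ f x y along the filter (𝓝[>] a) ×ˢ (𝓝[>] a) are equal, and consequently there exists L ∈ ℝ with Filter.Tendsto (fun p : ℝ × ℝ => f p.1 p.2) ((𝓝[>] a) ×ˢ (𝓝[>] a)) (𝓝 L). (The nonincreasing case follows by symmetry; the boundedness hypothesis, used implicitly in the paper, guarantees the common value is a real number.) -/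
open Filter Topology Metric Set

/-! For `x, y > a` the value `f x y` is squeezed between the diagonal values `f m m` and
`f M M`, where `m = min x y` and `M = max x y`. Both `m` and `M` tend to `a⁺` when `(x, y)`
does, and the monotone diagonal `x ↦ f x x` has a right limit at `a`, finite because the
diagonal is bounded below by `f a a` there; so `f` converges to it. -/

section MonotoneInEachVariable

variable {α β : Type*}

theorem monotone_diag_of_monotone_left_right [Preorder α] [Preorder β] {f : α → α → β}
    (hleft : ∀ y, Monotone (f · y)) (hright : ∀ x, Monotone (f x)) :
    Monotone fun x => f x x :=
  fun x y hxy => (hright x hxy).trans (hleft y hxy)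

variable [LinearOrder α] [Preorder β] {f : α → α → β}

theorem diag_min_le_of_monotone_left_right (hleft : ∀ y, Monotone (f · y))
    (hright : ∀ x, Monotone (f x)) (x y : α) : f (min x y) (min x y) ≤ f x y :=
  calc f (min x y) (min x y) ≤ f x (min x y) := hleft _ (min_le_left x y)
    _ ≤ f x y := hright x (min_le_right x y)

theorem le_diag_max_of_monotone_left_right (hleft : ∀ y, Monotone (f · y))
    (hright : ∀ x, Monotone (f x)) (x y : α) : f x y ≤ f (max x y) (max x y) :=
  calc f x y ≤ f (max x y) y := hleft y (le_max_left x y)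
    _ ≤ f (max x y) (max x y) := hright _ (le_max_right x y)

theorem Filter.tendsto_min_prod_self (l : Filter α) :
    Tendsto (fun p : α × α => min p.1 p.2) (l ×ˢ l) l :=
  tendsto_def.2 fun s hs =>
    mem_of_superset (prod_mem_prod hs hs) fun _ hp => min_rec' (· ∈ s) hp.1 hp.2

theorem Filter.tendsto_max_prod_self (l : Filter α) :
    Tendsto (fun p : α × α => max p.1 p.2) (l ×ˢ l) l :=
  tendsto_def.2 fun s hs =>
    mem_of_superset (prod_mem_prod hs hs) fun _ hp => max_rec' (· ∈ s) hp.1 hp.2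

theorem tendsto_prod_self_of_monotone_left_right [TopologicalSpace β] [OrderTopology β]
    {l : Filter α} {L : β} (hleft : ∀ y, Monotone (f · y)) (hright : ∀ x, Monotone (f x))
    (hdiag : Tendsto (fun x => f x x) l (𝓝 L)) :
    Tendsto (fun p : α × α => f p.1 p.2) (l ×ˢ l) (𝓝 L) :=
  tendsto_of_tendsto_of_tendsto_of_le_of_le (hdiag.comp (tendsto_min_prod_self l))
    (hdiag.comp (tendsto_max_prod_self l))
    (fun p => diag_min_le_of_monotone_left_right hleft hright p.1 p.2)
    (fun p => le_diag_max_of_monotone_left_right hleft hright p.1 p.2)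

end MonotoneInEachVariable

theorem two_variable_monotone_limit_general (f : ℝ → ℝ → ℝ) (a : ℝ)
    (hmono : ∀ r : ℝ, Monotone (fun x => f x r) ∧ Monotone (fun x => f r x)) :
    Filter.limsup (fun p : ℝ × ℝ => f p.1 p.2) ((𝓝[>] a) ×ˢ (𝓝[>] a))
      = Filter.liminf (fun p : ℝ × ℝ => f p.1 p.2) ((𝓝[>] a) ×ˢ (𝓝[>] a)) ∧
    ∃ L : ℝ, Filter.Tendsto (fun p : ℝ × ℝ => f p.1 p.2)
      ((𝓝[>] a) ×ˢ (𝓝[>] a)) (𝓝 L) := by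
  have hleft : ∀ y, Monotone (f · y) := fun y => (hmono y).1
  have hright : ∀ x, Monotone (f x) := fun x => (hmono x).2
  have hf := tendsto_prod_self_of_monotone_left_right hleft hright
    ((monotone_diag_of_monotone_left_right hleft hright).tendsto_nhdsGT a)
  exact ⟨hf.limsup_eq.trans hf.liminf_eq.symm, _, hf⟩

/-- Appendix Lemma B.1: a component-wise monotone nondecreasing function of
two real variables, bounded below near `(a, a)` from the right, has equal
right-sided limsup and liminf at `(a, a)`, hence a right-sided limit. -/
theorem two_variable_monotone_limit (f : ℝ → ℝ → ℝ) (a : ℝ)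
    (hmono : ∀ r : ℝ, Monotone (fun x => f x r) ∧ Monotone (fun x => f r x))
    (hbdd : ∃ ε > (0:ℝ), ∃ C : ℝ, ∀ x ∈ Set.Ioo a (a + ε),
      ∀ y ∈ Set.Ioo a (a + ε), C ≤ f x y) :
    Filter.limsup (fun p : ℝ × ℝ => f p.1 p.2) ((𝓝[>] a) ×ˢ (𝓝[>] a))
      = Filter.liminf (fun p : ℝ × ℝ => f p.1 p.2) ((𝓝[>] a) ×ˢ (𝓝[>] a)) ∧
    ∃ L : ℝ, Filter.Tendsto (fun p : ℝ × ℝ => f p.1 p.2)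
      ((𝓝[>] a) ×ˢ (𝓝[>] a)) (𝓝 L) :=
  two_variable_monotone_limit_general f a hmono
end
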